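/- Define, for s ≤ 0, φ_s = e^{μs} R_s L, p_s = μ e^{μs} R_s L, and S_s = (μ/2) e^{2μs} ‖L‖². Then: (i) (d/ds) φ_s = A φ_s + 2 p_s and (d/ds) p_s = −Aᵀ p_s for all s ≤ 0; (ii) φ_0 = L; (iii) φ_s → 0 and p_s → 0 as s → −∞; and (iv) (d/ds) S_s = ‖p_s‖² with S_0 = (μ/2)‖L‖². That is, (φ_s, p_s) is the zero-energy solution of the Hamiltonian system converging backward in time to the fixed point (0,0), with terminal cost equal to the quasi-potential value (μ/2)‖L‖². -/

import Mathlib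

/-!
With `J` the quarter turn, `A = -μ + ωJ` and `R_t = cos (ωt) + sin (ωt) J`, so `φ` is the
logarithmic spiral `e^{μs} (cos (ωs) L + sin (ωs) JL)`. Since `J² = -1` it solves
`φ' = μφ + ωJφ`, and as `p = μφ` and `-Aᵀ = μ + ωJ` both equations of (i) reduce to this one.
Since `J` is an isometry orthogonal to the identity, `‖φ_s‖ = e^{μs} ‖L‖`, which gives (iii)
and `‖p_s‖² = μ² e^{2μs} ‖L‖² = S'_s`.
-/

open scoped Matrix RealInnerProductSpace
open Filter Real Topology

noncomputable def spiral {E : Type*} [AddCommGroup E] [Module ℝ E] (K : E →ₗ[ℝ] E) (μ ω : ℝ)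
    (v : E) (t : ℝ) : E :=
  exp (μ * t) • (cos (ω * t) • v + sin (ω * t) • K v)

section NormedSpace

variable {E : Type*} [NormedAddCommGroup E] [NormedSpace ℝ E] (K : E →ₗ[ℝ] E) (μ ω : ℝ) (v : E)

@[simp]
theorem spiral_zero : spiral K μ ω v 0 = v := by
  simp [spiral]

theorem hasDerivAt_spiral (hK : ∀ v, K (K v) = -v) (t : ℝ) :
    HasDerivAt (spiral K μ ω v) (μ • spiral K μ ω v t + ω • K (spiral K μ ω v t)) t := by
  have hexp : HasDerivAt (fun t => exp (μ * t)) (exp (μ * t) * μ) t := by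
    simpa using ((hasDerivAt_id t).const_mul μ).exp
  have hcos : HasDerivAt (fun t => cos (ω * t)) (-sin (ω * t) * ω) t := by
    simpa using ((hasDerivAt_id t).const_mul ω).cos
  have hsin : HasDerivAt (fun t => sin (ω * t)) (cos (ω * t) * ω) t := by
    simpa using ((hasDerivAt_id t).const_mul ω).sin
  refine (hexp.smul ((hcos.smul_const v).add (hsin.smul_const (K v)))).congr_deriv ?_
  simp only [spiral, Pi.add_apply, map_smul, map_add, hK]
  module

end NormedSpace

section InnerProductSpace

variable {E : Type*} [NormedAddCommGroup E] [InnerProductSpace ℝ E] (K : E →ₗ[ℝ] E) (μ ω : ℝ)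
  (v : E)

theorem norm_spiral (hK_norm : ∀ v, ‖K v‖ = ‖v‖) (hK_inner : ∀ v, ⟪v, K v⟫ = 0) (t : ℝ) :
    ‖spiral K μ ω v t‖ = exp (μ * t) * ‖v‖ := by
  have hrot : ‖cos (ω * t) • v + sin (ω * t) • K v‖ ^ 2 = ‖v‖ ^ 2 := by
    rw [norm_add_sq_real, inner_smul_left, inner_smul_right, hK_inner, norm_smul, norm_smul,
      hK_norm, Real.norm_eq_abs, Real.norm_eq_abs]
    nlinarith [sin_sq_add_cos_sq (ω * t), sq_abs (sin (ω * t)), sq_abs (cos (ω * t))]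
  rw [spiral, norm_smul, Real.norm_of_nonneg (exp_pos _).le,
    (pow_left_inj₀ (norm_nonneg _) (norm_nonneg _) two_ne_zero).1 hrot]

theorem tendsto_spiral_atBot (hK_norm : ∀ v, ‖K v‖ = ‖v‖) (hK_inner : ∀ v, ⟪v, K v⟫ = 0)
    (hμ : 0 < μ) : Tendsto (spiral K μ ω v) atBot (𝓝 0) := by
  rw [tendsto_zero_iff_norm_tendsto_zero]
  simp_rw [norm_spiral K μ ω v hK_norm hK_inner]
  simpa using (tendsto_exp_atBot.comp (tendsto_id.const_mul_atBot hμ)).mul_const ‖v‖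

end InnerProductSpace

noncomputable def quarterTurn : EuclideanSpace ℝ (Fin 2) →ₗ[ℝ] EuclideanSpace ℝ (Fin 2) :=
  Matrix.toEuclideanLin !![0, -1; 1, 0]

theorem quarterTurn_apply (v : EuclideanSpace ℝ (Fin 2)) : quarterTurn v = !₂[-v 1, v 0] := by
  ext i
  fin_cases i <;> simp [quarterTurn, Matrix.toLpLin_apply, Matrix.vecHead, Matrix.vecTail]

theorem quarterTurn_quarterTurn (v : EuclideanSpace ℝ (Fin 2)) :
    quarterTurn (quarterTurn v) = -v := by
  ext i
  fin_cases i <;> simp [quarterTurn_apply]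

theorem norm_quarterTurn (v : EuclideanSpace ℝ (Fin 2)) : ‖quarterTurn v‖ = ‖v‖ := by
  simp only [EuclideanSpace.norm_eq, Fin.sum_univ_two, quarterTurn_apply]
  simp [add_comm]

theorem inner_self_quarterTurn (v : EuclideanSpace ℝ (Fin 2)) : ⟪v, quarterTurn v⟫ = 0 := by
  simp [quarterTurn_apply, EuclideanSpace.inner_eq_star_dotProduct, Matrix.vecHead,
    Matrix.vecTail]
  ring

theorem toEuclideanLin_conformal_apply (a b : ℝ) (v : EuclideanSpace ℝ (Fin 2)) :
    Matrix.toEuclideanLin !![a, -b; b, a] v = a • v + b • quarterTurn v := by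
  ext i
  fin_cases i <;> simp [quarterTurn_apply, Matrix.toLpLin_apply, Matrix.vecHead, Matrix.vecTail]
  ring

theorem toEuclideanLin_conformal_transpose_apply (a b : ℝ) (v : EuclideanSpace ℝ (Fin 2)) :
    Matrix.toEuclideanLin !![a, -b; b, a]ᵀ v = a • v + (-b) • quarterTurn v := by
  have htranspose : !![a, -b; b, a]ᵀ = !![a, -(-b); -b, a] := by
    rw [neg_neg]
    ext i j
    fin_cases i <;> fin_cases j <;> rfl
  rw [htranspose, toEuclideanLin_conformal_apply]

theorem stmt13_general (μ ω : ℝ) (hμ : 0 < μ)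
    (L : EuclideanSpace ℝ (Fin 2))
    (A : Matrix (Fin 2) (Fin 2) ℝ) (hA : A = !![-μ, -ω; ω, -μ])
    (R : ℝ → Matrix (Fin 2) (Fin 2) ℝ)
    (hR : ∀ t, R t = !![Real.cos (ω * t), -Real.sin (ω * t);
                        Real.sin (ω * t), Real.cos (ω * t)])
    (φ p : ℝ → EuclideanSpace ℝ (Fin 2)) (S : ℝ → ℝ)
    (hφ : ∀ s, φ s = Real.exp (μ * s) • Matrix.toEuclideanLin (R s) L)
    (hp : ∀ s, p s = (μ * Real.exp (μ * s)) • Matrix.toEuclideanLin (R s) L)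
    (hS : ∀ s, S s = μ / 2 * Real.exp (2 * μ * s) * ‖L‖ ^ 2) :
    (∀ s ≤ (0:ℝ),
        HasDerivAt φ (Matrix.toEuclideanLin A (φ s) + (2:ℝ) • p s) s ∧
        HasDerivAt p (-(Matrix.toEuclideanLin Aᵀ (p s))) s) ∧
    φ 0 = L ∧
    (Tendsto φ atBot (nhds 0) ∧ Tendsto p atBot (nhds 0)) ∧
    ((∀ s ≤ (0:ℝ), HasDerivAt S (‖p s‖ ^ 2) s) ∧ S 0 = μ / 2 * ‖L‖ ^ 2) := by
  have hφ_spiral : φ = spiral quarterTurn μ ω L := by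
    ext1 s
    rw [hφ, hR, toEuclideanLin_conformal_apply, spiral]
  have hp_smul : p = fun s => μ • φ s := by
    ext1 s
    rw [hp, hφ, smul_smul]
  have hφ_deriv (s : ℝ) : HasDerivAt φ (μ • φ s + ω • quarterTurn (φ s)) s := by
    rw [hφ_spiral]
    exact hasDerivAt_spiral quarterTurn μ ω L quarterTurn_quarterTurn s
  have hφ_norm (s : ℝ) : ‖φ s‖ = exp (μ * s) * ‖L‖ := by
    rw [hφ_spiral]
    exact norm_spiral quarterTurn μ ω L norm_quarterTurn inner_self_quarterTurn s
  have hφ_tendsto : Tendsto φ atBot (𝓝 0) := by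
    rw [hφ_spiral]
    exact tendsto_spiral_atBot quarterTurn μ ω L norm_quarterTurn inner_self_quarterTurn hμ
  have hS_deriv (s : ℝ) : HasDerivAt S (μ / 2 * (exp (2 * μ * s) * (2 * μ)) * ‖L‖ ^ 2) s := by
    rw [show S = _ from funext hS]
    simpa using ((((hasDerivAt_id s).const_mul (2 * μ)).exp).const_mul (μ / 2)).mul_const _
  refine ⟨fun s _ => ⟨?_, ?_⟩, ?_, ⟨hφ_tendsto, ?_⟩, fun s _ => ?_, ?_⟩
  · refine (hφ_deriv s).congr_deriv ?_
    rw [hA, toEuclideanLin_conformal_apply, hp_smul]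
    module
  · rw [hp_smul]
    refine ((hφ_deriv s).const_smul μ).congr_deriv ?_
    rw [hA, toEuclideanLin_conformal_transpose_apply, map_smul]
    module
  · rw [hφ_spiral, spiral_zero]
  · simpa [hp_smul] using hφ_tendsto.const_smul μ
  · refine (hS_deriv s).congr_deriv ?_
    rw [hp_smul, norm_smul, hφ_norm, Real.norm_of_nonneg hμ.le, mul_pow, mul_pow, ← exp_nat_mul]
    ring_nf
  · rw [hS]
    simp

/-- The globally optimal MLT for the 2D OU process.
With `φ_s = e^{μs} R_s L`, `p_s = μ e^{μs} R_s L`, `S_s = (μ/2) e^{2μs} ‖L‖²` for `s ≤ 0`: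
(i) `φ' = Aφ + 2p`, `p' = −Aᵀ p` on `(−∞,0]`; (ii) `φ_0 = L`; (iii) `φ_s → 0` and `p_s → 0`
as `s → −∞`; (iv) `S' = ‖p_s‖²` with `S_0 = (μ/2)‖L‖²`. -/
theorem stmt13 (μ ω : ℝ) (hμ : 0 < μ)
    (L : EuclideanSpace ℝ (Fin 2)) (hL : L ≠ 0)
    (A : Matrix (Fin 2) (Fin 2) ℝ) (hA : A = !![-μ, -ω; ω, -μ])
    (R : ℝ → Matrix (Fin 2) (Fin 2) ℝ)
    (hR : ∀ t, R t = !![Real.cos (ω * t), -Real.sin (ω * t);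
                        Real.sin (ω * t), Real.cos (ω * t)])
    (φ p : ℝ → EuclideanSpace ℝ (Fin 2)) (S : ℝ → ℝ)
    (hφ : ∀ s, φ s = Real.exp (μ * s) • Matrix.toEuclideanLin (R s) L)
    (hp : ∀ s, p s = (μ * Real.exp (μ * s)) • Matrix.toEuclideanLin (R s) L)
    (hS : ∀ s, S s = μ / 2 * Real.exp (2 * μ * s) * ‖L‖ ^ 2) :
    (∀ s ≤ (0:ℝ),
        HasDerivAt φ (Matrix.toEuclideanLin A (φ s) + (2:ℝ) • p s) s ∧
        HasDerivAt p (-(Matrix.toEuclideanLin Aᵀ (p s))) s) ∧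
    φ 0 = L ∧
    (Tendsto φ atBot (nhds 0) ∧ Tendsto p atBot (nhds 0)) ∧
    ((∀ s ≤ (0:ℝ), HasDerivAt S (‖p s‖ ^ 2) s) ∧ S 0 = μ / 2 * ‖L‖ ^ 2) :=
  stmt13_general μ ω hμ L A hA R hR φ p S hφ hp hS
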